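/- arXiv:1411.0935 — 6 statements merged into one kernel-verified Lean document; each statement's English description precedes it below -/
import Mathlib

section
/- Let M be a matroid of rank r on a finite ground set E, and let X ⊆ E with |X| = r be dependent in M. Then there exists a collection Z of flats of M with |Z| ≤ 2 such that every dependent set Y ∈ N(X) ∪ {X} (with |Y| = r) is covered by some flat in Z, i.e. there is F ∈ Z with |F ∩ Y| > r_M(F). -/
open Filter
open scoped symmDiff

variable {α : Type*}

/-- The rank of a matroid: the common cardinality of its bases. -/
noncomputable def Matroid.rnk (M : Matroid α) : ℕ :=
  sSup {k | ∃ B, M.IsBase B ∧ B.ncard = k}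

/-- The rank function of a matroid. -/
noncomputable def Matroid.rkFun (M : Matroid α) (X : Set α) : ℕ :=
  sSup {k | ∃ I, I ⊆ X ∧ M.Indep I ∧ I.ncard = k}

/-- A circuit: a minimal dependent set. -/
def Matroid.IsCircuitSet (M : Matroid α) (C : Set α) : Prop :=
  M.Dep C ∧ ∀ D ⊂ C, M.Indep D

/-- A cocircuit: a circuit of the dual. -/
def Matroid.IsCocircuitSet (M : Matroid α) (D : Set α) : Prop :=
  M✶.IsCircuitSet D

/-- A matroid is paving if every circuit has cardinality at least the rank. -/
def Matroid.Paving (M : Matroid α) : Prop :=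
  ∀ C, M.IsCircuitSet C → M.rnk ≤ C.ncard

/-- Sparse paving: both the matroid and its dual are paving. -/
def Matroid.SparsePaving (M : Matroid α) : Prop :=
  M.Paving ∧ M✶.Paving

/-- A matroid has no loops iff every singleton of the ground set is independent. -/
def Matroid.LoopFree (M : Matroid α) : Prop :=
  ∀ e ∈ M.E, M.Indep {e}

/-- A matroid has no coloops iff its dual has no loops. -/
def Matroid.ColoopFree (M : Matroid α) : Prop :=
  M✶.LoopFree

/-- A flat: a set whose rank increases upon adding any element of the ground set outside it. -/
def Matroid.IsFlatSet (M : Matroid α) (F : Set α) : Prop :=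
  F ⊆ M.E ∧ ∀ e ∈ M.E \ F, M.rkFun F < M.rkFun (F ∪ {e})

/-- The number of matroids on ground set `{1, …, n}`. -/
noncomputable def numMatroids (n : ℕ) : ℕ :=
  Nat.card {M : Matroid (Fin n) // M.E = Set.univ}

/-- The number of sparse paving matroids on ground set `{1, …, n}`. -/
noncomputable def numSparsePaving (n : ℕ) : ℕ :=
  Nat.card {M : Matroid (Fin n) // M.E = Set.univ ∧ M.SparsePaving}

/-- The number of loopless, coloopless matroids on ground set `{1, …, n}`. -/
noncomputable def numMatroidsNoLoopColoop (n : ℕ) : ℕ :=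
  Nat.card {M : Matroid (Fin n) // M.E = Set.univ ∧ M.LoopFree ∧ M.ColoopFree}

/-- Number of rank-`r` loopless, coloopless matroids on `{1, …, n}`. -/
noncomputable def numMatroidsNoLoopColoopRk (n r : ℕ) : ℕ :=
  Nat.card {M : Matroid (Fin n) // M.E = Set.univ ∧ M.rnk = r ∧ M.LoopFree ∧ M.ColoopFree}

/-- Number of rank-`r` sparse paving matroids on `{1, …, n}`. -/
noncomputable def numSparsePavingRk (n r : ℕ) : ℕ :=
  Nat.card {M : Matroid (Fin n) // M.E = Set.univ ∧ M.rnk = r ∧ M.SparsePaving}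

/-- The Johnson graph `J(E, r)` on the `r`-element subsets of a type. -/
def johnsonGraph (α : Type*) [DecidableEq α] (r : ℕ) :
    SimpleGraph {X : Finset α // X.card = r} where
  Adj X Y := (X.1 ∆ Y.1).card = 2
  symm := by constructor; intro X Y h; rwa [symmDiff_comm]
  loopless := by constructor; intro X h; simp [symmDiff_self] at h

/-- A stable (independent) set of vertices in a graph. -/
def SimpleGraph.IsStableSet {V : Type*} (G : SimpleGraph V) (s : Set V) : Prop :=
  ∀ ⦃x⦄, x ∈ s → ∀ ⦃y⦄, y ∈ s → ¬ G.Adj x y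

/-- The number of stable sets of a graph. -/
noncomputable def numStableSets {V : Type*} (G : SimpleGraph V) : ℕ :=
  Nat.card {s : Set V // G.IsStableSet s}

/-! Take `F₁ = cl X` and `F₂ = cl C` for a circuit `C ⊆ X`. The flat `F₁` has rank `r(X) < |X|`,
so it covers `X`, every neighbour `X - x + y` with `y ∈ cl X`, and every neighbour at all when
`|X| ≥ r(X) + 2`. Otherwise `|X| = r(X) + 1` and `y ∉ cl X`: if `x ∉ C` then `C ⊆ Y` and `F₂`
covers `Y`; if `x ∈ C` then `x ∈ cl (X - x)`, so `X - x` has rank `r(X) = |X - x|` and is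
independent, and so is `Y` since `y ∉ cl (X - x)`. -/

namespace Matroid

open Set

variable {M : Matroid α} {X Y A S C F : Set α} {x : α}

lemma cast_rkFun_eq_eRk [M.RankFinite] (X : Set α) : (M.rkFun X : ℕ∞) = M.eRk X := by
  obtain ⟨I, hI⟩ := M.exists_isBasis' X
  have hIfin : I.Finite := hI.indep.finite
  have hrk : M.rkFun X = I.ncard := by
    refine IsGreatest.csSup_eq ⟨⟨I, hI.subset, hI.indep, rfl⟩, ?_⟩
    rintro _ ⟨J, hJX, hJ, rfl⟩
    rw [← Nat.cast_le (α := ℕ∞), hJ.finite.cast_ncard_eq, hIfin.cast_ncard_eq, hI.encard_eq_eRk]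
    exact hJ.encard_le_eRk_of_subset hJX
  rw [hrk, hIfin.cast_ncard_eq, hI.encard_eq_eRk]

lemma IsFlat.isFlatSet [M.RankFinite] (hF : M.IsFlat F) : M.IsFlatSet F := by
  refine ⟨hF.subset_ground, fun e he ↦ ?_⟩
  rw [← Nat.cast_lt (α := ℕ∞), cast_rkFun_eq_eRk, cast_rkFun_eq_eRk, union_singleton,
    eRk_insert_eq_add_one (by rwa [hF.closure])]
  exact (ENat.lt_add_one_iff (M.isRkFinite_set F).eRk_lt_top.ne).mpr le_rfl

lemma rkFun_closure_lt_ncard_inter [M.Finite] (hAS : A ⊆ M.closure S) (hAY : A ⊆ Y)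
    (hlt : M.eRk S < A.encard) : M.rkFun (M.closure S) < (M.closure S ∩ Y).ncard := by
  have hfin : (M.closure S ∩ Y).Finite :=
    (M.set_finite _ (M.closure_subset_ground S)).inter_of_left Y
  rw [← Nat.cast_lt (α := ℕ∞), cast_rkFun_eq_eRk, eRk_closure_eq, hfin.cast_ncard_eq]
  exact hlt.trans_le (encard_le_encard (subset_inter hAS hAY))

lemma IsCircuit.indep_sdiff_singleton_of_encard_eq (hC : M.IsCircuit C) (hCX : C ⊆ X)
    (hx : x ∈ C) (hXfin : X.Finite) (hX : X.encard = M.eRk X + 1) : M.Indep (X \ {x}) := by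
  have hxcl : x ∈ M.closure (X \ {x}) := M.closure_subset_closure
    (sdiff_subset_sdiff_left hCX) (hC.mem_closure_sdiff_singleton_of_mem hx)
  have hcl : M.closure (X \ {x}) = M.closure X := closure_sdiff_singleton_eq_closure hxcl
  rw [indep_iff_eRk_eq_encard_of_finite hXfin.sdiff, ← eRk_closure_eq, hcl, eRk_closure_eq]
  have hsum : (X \ {x}).encard + 1 = M.eRk X + 1 :=
    hX ▸ encard_sdiff_singleton_add_one (hCX hx)
  exact (ENat.add_left_injective_of_ne_top ENat.one_ne_top hsum).symm

end Matroid

open Matroid Set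

theorem exists_local_cover_general {α : Type*} (M : Matroid α) [M.Finite]
    (X : Set α) (hdep : M.Dep X) :
    ∃ Z : Set (Set α), Z.ncard ≤ 2 ∧ (∀ F ∈ Z, M.IsFlatSet F) ∧
      ∀ Y : Set α, (Y = X ∨ ∃ x ∈ X, ∃ y ∈ M.E \ X, Y = insert y (X \ {x})) →
        M.Dep Y → ∃ F ∈ Z, M.rkFun F < (F ∩ Y).ncard := by
  have hXrk : M.eRk X < X.encard := hdep.eRk_lt_encard
  obtain ⟨C, hCX, hC⟩ := hdep.exists_isCircuit_subset
  refine ⟨{M.closure X, M.closure C}, (ncard_insert_le _ _).trans (by simp), ?_, ?_⟩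
  · rintro F (rfl | rfl : F = _ ∨ F = _) <;> exact (M.isFlat_closure _).isFlatSet
  rintro Y (rfl | ⟨x, hx, y, hy, rfl⟩) hY
  · exact ⟨_, mem_insert _ _, rkFun_closure_lt_ncard_inter (M.subset_closure Y) subset_rfl hXrk⟩
  have hXx : (X \ {x}).encard + 1 = X.encard := encard_sdiff_singleton_add_one hx
  by_cases hyX : y ∈ M.closure X
  · refine ⟨_, mem_insert _ _, rkFun_closure_lt_ncard_inter
      (insert_subset hyX (sdiff_subset.trans (M.subset_closure X))) subset_rfl ?_⟩
    rwa [encard_insert_of_notMem (fun h ↦ hy.2 h.1), hXx]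
  by_cases hnull : M.eRk X + 1 < X.encard
  · refine ⟨_, mem_insert _ _, rkFun_closure_lt_ncard_inter
      (sdiff_subset.trans (M.subset_closure X)) (subset_insert _ _) ?_⟩
    rw [← hXx] at hnull
    exact lt_of_add_lt_add_right hnull
  by_cases hxC : x ∈ C
  · have hindep := hC.indep_sdiff_singleton_of_encard_eq hCX hxC
      (M.set_finite X hdep.subset_ground)
      (le_antisymm (not_lt.mp hnull) (Order.add_one_le_of_lt hXrk))
    exact absurd ((hindep.insert_indep_iff_of_notMem (fun h ↦ hy.2 h.1)).mpr
      ⟨hy.1, fun h ↦ hyX (M.closure_subset_closure sdiff_subset h)⟩) hY.not_indep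
  · exact ⟨_, mem_insert_of_mem _ rfl, rkFun_closure_lt_ncard_inter (M.subset_closure C)
      (fun c hc ↦ mem_insert_of_mem _ ⟨hCX hc, by rintro rfl; exact hxC hc⟩)
      hC.dep.eRk_lt_encard⟩

/-- a dependent `r`-set `X` admits a local cover by at most two flats:
every dependent `Y ∈ N(X) ∪ {X}` satisfies `|F ∩ Y| > r_M(F)` for some `F` in the cover. -/
theorem exists_local_cover {α : Type*} (M : Matroid α) [M.Finite] (r : ℕ)
    (hr : M.rnk = r) (X : Set α) (hXcard : X.ncard = r) (hdep : M.Dep X) :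
    ∃ Z : Set (Set α), Z.ncard ≤ 2 ∧ (∀ F ∈ Z, M.IsFlatSet F) ∧
      ∀ Y : Set α, (Y = X ∨ ∃ x ∈ X, ∃ y ∈ M.E \ X, Y = insert y (X \ {x})) →
        M.Dep Y → ∃ F ∈ Z, M.rkFun F < (F ∩ Y).ncard :=
  exists_local_cover_general M X hdep
end

section
/- Let n and k be natural numbers with k < ⌊n/2⌋. Then C(n, ⌊n/2⌋ − k) ≤ C(n, ⌊n/2⌋) · 2^{−k²/(⌈n/2⌉ + k)}, where the right-hand side is interpreted as a real number and 2^{−k²/(⌈n/2⌉+k)} is a real power with real exponent −k²/(⌈n/2⌉+k). -/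
open Filter
open scoped symmDiff

variable {α : Type*}

lemma one_sub_le_two_rpow_neg {x : ℝ} (hx : 0 ≤ x) : 1 - x ≤ (2 : ℝ) ^ (-x) := by
  rw [Real.rpow_def_of_pos two_pos]
  have hlog : Real.log 2 ≤ 1 := by
    linarith [Real.log_le_sub_one_of_pos (two_pos : (0 : ℝ) < 2)]
  nlinarith [Real.add_one_le_exp (Real.log 2 * -x)]

lemma div_le_two_rpow_neg_div {p q r : ℝ} (hpr : p + r ≤ q) (hr : 0 ≤ r) (hq : 0 < q) :
    p / q ≤ (2 : ℝ) ^ (-(r / q)) :=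
  calc p / q ≤ 1 - r / q := by rw [one_sub_div hq.ne']; gcongr; linarith
    _ ≤ (2 : ℝ) ^ (-(r / q)) := one_sub_le_two_rpow_neg (by positivity)

lemma add_one_sq_div_add_one_le {x d : ℝ} (hd : 0 < d) :
    (x + 1) ^ 2 / (d + 1) ≤ x ^ 2 / d + (2 * x + 1) / (d + 1) := by
  have hsq : (x + 1) ^ 2 = x ^ 2 + (2 * x + 1) := by ring
  rw [hsq, add_div]
  gcongr
  linarith

lemma choose_sub_succ_eq {n m c j : ℕ} (hn : m + c = n) (hj : j < m) :
    (n.choose (m - (j + 1)) : ℝ) = n.choose (m - j) * ((m - j) / (c + j + 1)) := by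
  have hrec := Nat.choose_succ_right_eq n (m - (j + 1))
  rw [show m - (j + 1) + 1 = m - j by omega, show n - (m - (j + 1)) = c + j + 1 by omega] at hrec
  have hrec' : (n.choose (m - (j + 1)) : ℝ) * (c + j + 1) = n.choose (m - j) * (m - j) := by
    rw [← Nat.cast_sub hj.le]; exact_mod_cast hrec.symm
  rw [mul_div, eq_div_iff (by positivity), hrec']

/-- Each step away from the middle multiplies the binomial coefficient by
`(m - j) / (c + j + 1) ≤ 2^{-(2j+1)/(c+j+1)}`, and these exponents add up to at least
`j² / (c + j)`. -/
theorem choose_sub_le_choose_mul_two_rpow {n m c j : ℕ} (hn : m + c = n) (hmc : m ≤ c)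
    (hj : j ≤ m) :
    (n.choose (m - j) : ℝ) ≤ n.choose m * 2 ^ (-((j : ℝ) ^ 2 / (c + j))) := by
  induction j with
  | zero => simp
  | succ j ih =>
    have hjm : j < m := hj
    have hc : (0 : ℝ) < c + j := by
      have : 0 < c := by omega
      positivity
    have hratio : ((m : ℝ) - j) / (c + j + 1) ≤ (2 : ℝ) ^ (-((2 * j + 1 : ℝ) / (c + j + 1))) :=
      div_le_two_rpow_neg_div (by linarith [(Nat.cast_le (α := ℝ)).2 hmc]) (by positivity)
        (by positivity)
    have hexp : -((j : ℝ) ^ 2 / (c + j)) + -((2 * j + 1) / (c + j + 1)) ≤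
        -(((j + 1 : ℕ) : ℝ) ^ 2 / (c + (j + 1 : ℕ))) := by
      push_cast
      rw [← add_assoc]
      linarith [add_one_sq_div_add_one_le (x := (j : ℝ)) hc]
    have hratio_nonneg : (0 : ℝ) ≤ (m - j) / (c + j + 1) :=
      div_nonneg (by linarith [(Nat.cast_lt (α := ℝ)).2 hjm]) (by positivity)
    calc (n.choose (m - (j + 1)) : ℝ) = n.choose (m - j) * ((m - j) / (c + j + 1)) :=
          choose_sub_succ_eq hn hjm
      _ ≤ (n.choose m * 2 ^ (-((j : ℝ) ^ 2 / (c + j)))) *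
            2 ^ (-((2 * j + 1 : ℝ) / (c + j + 1))) :=
          mul_le_mul (ih hjm.le) hratio hratio_nonneg (by positivity)
      _ = n.choose m * 2 ^ (-((j : ℝ) ^ 2 / (c + j)) + -((2 * j + 1) / (c + j + 1))) := by
          rw [Real.rpow_add two_pos, mul_assoc]
      _ ≤ n.choose m * 2 ^ (-(((j + 1 : ℕ) : ℝ) ^ 2 / (c + (j + 1 : ℕ)))) :=
          mul_le_mul_of_nonneg_left (Real.rpow_le_rpow_of_exponent_le one_le_two hexp)
            (by positivity)

/-- `C(n, ⌊n/2⌋ − k) ≤ C(n, ⌊n/2⌋) · 2^{−k²/(⌈n/2⌉+k)}` for `k < ⌊n/2⌋`. -/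
theorem choose_floor_sub_le (n k : ℕ) (hk : k < n / 2) :
    (n.choose (n / 2 - k) : ℝ) ≤
      (n.choose (n / 2) : ℝ) *
        2 ^ (-((k : ℝ) ^ 2 / ((((n + 1) / 2 : ℕ) : ℝ) + (k : ℝ)))) :=
  choose_sub_le_choose_mul_two_rpow (by omega) (by omega) hk.le
end

section
/- There exists a constant c > 0 such that for all sufficiently large n and all integers r with 1 ≤ r ≤ n/2, Σ_{k=0}^{2⌈σ̃_{n,r} N⌉} C(2^n(n+1), k) ≤ 2^{c (log n)²/n² · C(n, ⌊n/2⌋)}, where N = C(n,r), σ̃_{n,r} = ln(r(n−r)+1)/(r(n−r+1)) + 1/((r+1)(n−r+1)), and the right-hand side is a real power of 2. -/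
/-!
Write `M = C(n, ⌊n/2⌋)` and `m = 2ⁿ(n+1)`. Since `σ̃_{n,r} ≤ 3 ln n / (r(n-r+1))` and
`n² C(n,r) ≤ 8 r (n-r+1) M` (from `(n+1)(n+2) C(n,r) = (r+1)(n-r+1) C(n+2,r+1)`), the number `K`
of terms is at most `Q = 50 ln n · M / n²`. The Chernoff-type bound
`Σ_{k≤K} C(m,k) ≤ exp (K (1 + ln (m/K)))`, whose exponent increases with `K` on `(0, m]`, then
gives `exp (Q (1 + ln (m/Q)))`, and `m/Q ≤ n⁶` because `2ⁿ ≤ (n+1) M`.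
-/

open Filter
open scoped symmDiff

variable {α : Type*}

open Real Finset

theorem sum_range_choose_le_exp {m K : ℕ} (hK : 0 < K) (hKm : K ≤ m) :
    ∑ k ∈ range (K + 1), (m.choose k : ℝ) ≤ exp (K * (1 + log (m / K))) := by
  have hK' : (0 : ℝ) < K := by exact_mod_cast hK
  have hm : (0 : ℝ) < m := by exact_mod_cast hK.trans_le hKm
  set t : ℝ := K / m with ht
  have ht0 : 0 < t := by positivity
  have ht1 : t ≤ 1 := div_le_one_of_le₀ (by exact_mod_cast hKm) hm.le
  have hbinom : ∑ k ∈ range (m + 1), (m.choose k : ℝ) * t ^ k = (1 + t) ^ m := by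
    rw [add_comm 1 t, add_pow]; simp only [one_pow, mul_one, mul_comm]
  -- Chernoff: each term is weighted by `t ^ (k - K) ≥ 1`, then the binomial theorem applies.
  calc ∑ k ∈ range (K + 1), (m.choose k : ℝ)
      ≤ ∑ k ∈ range (K + 1), m.choose k * t ^ k / t ^ K := by
        gcongr with k hk
        rw [le_div_iff₀ (by positivity)]
        exact mul_le_mul_of_nonneg_left
          (pow_le_pow_of_le_one ht0.le ht1 (Nat.lt_succ_iff.1 (mem_range.1 hk))) (by positivity)
    _ ≤ (∑ k ∈ range (m + 1), m.choose k * t ^ k) / t ^ K := by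
        rw [← sum_div]
        gcongr
    _ ≤ exp t ^ m / t ^ K := by
        rw [hbinom]
        gcongr
        exact add_comm 1 t ▸ add_one_le_exp t
    _ = exp (K * (1 + log (m / K))) := by
        rw [← exp_nat_mul, ← exp_log (pow_pos ht0 K), ← exp_sub, log_pow, ← inv_div, log_inv,
          ← ht, mul_div_cancel₀ _ hm.ne']
        ring_nf

theorem mul_one_add_log_div_le_of_le {K Q m : ℝ} (hK : 0 < K) (hKQ : K ≤ Q) (hQm : Q ≤ m) :
    K * (1 + log (m / K)) ≤ Q * (1 + log (m / Q)) := by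
  have hQ : 0 < Q := hK.trans_le hKQ
  have hm : 0 < m := hQ.trans_le hQm
  have hmQ : 0 ≤ log (m / Q) := log_nonneg ((one_le_div hQ).2 hQm)
  have hQK : K * log (Q / K) ≤ Q - K := by
    have := log_le_sub_one_of_pos (div_pos hQ hK)
    rw [mul_comm]
    calc log (Q / K) * K ≤ (Q / K - 1) * K := mul_le_mul_of_nonneg_right this hK.le
      _ = Q - K := by field_simp
  have hsplit : log (m / K) = log (m / Q) + log (Q / K) := by
    rw [← log_mul (by positivity) (by positivity)]; field_simp
  rw [hsplit]
  nlinarith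

theorem two_pow_le_succ_mul_choose_half (n : ℕ) : 2 ^ n ≤ (n + 1) * n.choose (n / 2) :=
  calc 2 ^ n = ∑ k ∈ range (n + 1), n.choose k := (Nat.sum_range_choose n).symm
    _ ≤ ∑ _k ∈ range (n + 1), n.choose (n / 2) := sum_le_sum fun k _ => Nat.choose_le_middle k n
    _ = (n + 1) * n.choose (n / 2) := by simp

theorem pow_four_le_two_pow {n : ℕ} (hn : 16 ≤ n) : n ^ 4 ≤ 2 ^ n := by
  induction n, hn using Nat.le_induction with
  | base => norm_num
  | succ k hk ih =>
    have : (k + 1) ^ 4 ≤ 2 * k ^ 4 := by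
      have h3 : 16 * k ^ 3 ≤ k ^ 4 := by
        calc 16 * k ^ 3 ≤ k * k ^ 3 := Nat.mul_le_mul_right _ hk
          _ = k ^ 4 := by ring
      nlinarith
    calc (k + 1) ^ 4 ≤ 2 * k ^ 4 := this
      _ ≤ 2 * 2 ^ k := Nat.mul_le_mul_left 2 ih
      _ = 2 ^ (k + 1) := by ring

theorem sq_le_choose_half {n : ℕ} (hn : 16 ≤ n) : n ^ 2 ≤ n.choose (n / 2) := by
  have h : (n + 1) * n ^ 2 ≤ (n + 1) * n.choose (n / 2) :=
    calc (n + 1) * n ^ 2 ≤ n ^ 2 * n ^ 2 := by gcongr; nlinarith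
      _ = n ^ 4 := by ring
      _ ≤ 2 ^ n := pow_four_le_two_pow hn
      _ ≤ (n + 1) * n.choose (n / 2) := two_pow_le_succ_mul_choose_half n
  exact Nat.le_of_mul_le_mul_left h n.succ_pos

theorem choose_add_two_le_four_mul_choose_half (n k : ℕ) :
    (n + 2).choose (k + 2) ≤ 4 * n.choose (n / 2) := by
  rw [Nat.choose_succ_succ' (n + 1), Nat.choose_succ_succ' n k, Nat.choose_succ_succ' n (k + 1)]
  have := Nat.choose_le_middle k n
  have := Nat.choose_le_middle (k + 1) n
  have := Nat.choose_le_middle (k + 1 + 1) n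
  omega

theorem sq_mul_choose_le {n r : ℕ} (hr : 1 ≤ r) (hrn : r ≤ n) :
    n ^ 2 * n.choose r ≤ 8 * r * (n - r + 1) * n.choose (n / 2) := by
  obtain ⟨k, rfl⟩ : ∃ k, r = k + 1 := ⟨r - 1, by omega⟩
  have hpascal : (n + 1) * (n + 2) * n.choose (k + 1)
      = (k + 2) * (n - (k + 1) + 1) * (n + 2).choose (k + 2) := by
    have h1 := Nat.add_one_mul_choose_eq n (k + 1)
    have h2 := Nat.choose_mul_succ_eq (n + 1) (k + 2)
    rw [show n + 1 + 1 - (k + 2) = n - (k + 1) + 1 by omega] at h2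
    calc (n + 1) * (n + 2) * n.choose (k + 1) = (n + 1).choose (k + 2) * (n + 2) * (k + 2) := by
          rw [mul_right_comm, h1]; ring
      _ = _ := by rw [h2]; ring
  have hmid := choose_add_two_le_four_mul_choose_half n k
  have hsq : n ^ 2 ≤ (n + 1) * (n + 2) := by nlinarith
  have hk : k + 2 ≤ 2 * (k + 1) := by omega
  calc n ^ 2 * n.choose (k + 1) ≤ (n + 1) * (n + 2) * n.choose (k + 1) := by gcongr
    _ ≤ 2 * (k + 1) * (n - (k + 1) + 1) * (4 * n.choose (n / 2)) := by rw [hpascal]; gcongr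
    _ = _ := by ring

theorem log_two_pow_mul_succ_div_le {n : ℕ} (hn : 2 ≤ n) {Q : ℝ}
    (hQ : (n.choose (n / 2) : ℝ) ≤ n ^ 2 * Q) :
    log (2 ^ n * (n + 1) / Q) ≤ 6 * log n := by
  have hn' : (2 : ℝ) ≤ n := by exact_mod_cast hn
  have hM : (1 : ℝ) ≤ n.choose (n / 2) := by exact_mod_cast Nat.choose_pos (Nat.div_le_self n 2)
  have hQ0 : 0 < Q := pos_of_mul_pos_right (a := (n : ℝ) ^ 2) (by linarith) (by positivity)
  have h2n : (2 : ℝ) ^ n ≤ (n + 1) * n.choose (n / 2) := by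
    exact_mod_cast two_pow_le_succ_mul_choose_half n
  have hbound : 2 ^ n * (n + 1) / Q ≤ (n : ℝ) ^ 6 := by
    rw [div_le_iff₀ hQ0]
    have hsucc : (n : ℝ) + 1 ≤ n ^ 2 := by nlinarith
    calc 2 ^ n * ((n : ℝ) + 1) ≤ (n + 1) * n.choose (n / 2) * (n + 1) := by gcongr
      _ ≤ (n + 1) * (n ^ 2 * Q) * (n + 1) := by gcongr
      _ = (n + 1) ^ 2 * n ^ 2 * Q := by ring
      _ ≤ (n ^ 2) ^ 2 * n ^ 2 * Q := by gcongr
      _ = n ^ 6 * Q := by ring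
  calc log (2 ^ n * (n + 1) / Q) ≤ log ((n : ℝ) ^ 6) := log_le_log (by positivity) hbound
    _ = 6 * log n := by rw [log_pow]; norm_num

theorem one_le_log_natCast {n : ℕ} (hn : 3 ≤ n) : 1 ≤ log n := by
  rw [le_log_iff_exp_le (by positivity)]
  have : (3 : ℝ) ≤ n := by exact_mod_cast hn
  linarith [exp_one_lt_d9]

noncomputable def sigmaTilde (n r : ℕ) : ℝ :=
  log ((r : ℝ) * ((n : ℝ) - r) + 1) / ((r : ℝ) * ((n : ℝ) - r + 1)) +
    1 / (((r : ℝ) + 1) * ((n : ℝ) - r + 1))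

section sigmaTilde

variable {n r : ℕ}

theorem sigmaTilde_pos (hrn : r ≤ n) : 0 < sigmaTilde n r := by
  have hrn' : (r : ℝ) ≤ n := by exact_mod_cast hrn
  have hw : 0 < (n : ℝ) - r + 1 := by linarith
  have hlog : 0 ≤ log ((r : ℝ) * ((n : ℝ) - r) + 1) :=
    log_nonneg (by nlinarith [(Nat.cast_nonneg r : (0 : ℝ) ≤ r)])
  unfold sigmaTilde
  positivity

theorem sigmaTilde_le (hn : 3 ≤ n) (hr : 1 ≤ r) (hrn : r ≤ n) :
    sigmaTilde n r ≤ 3 * log n / (r * ((n : ℝ) - r + 1)) := by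
  have hr' : (1 : ℝ) ≤ r := by exact_mod_cast hr
  have hrn' : (r : ℝ) ≤ n := by exact_mod_cast hrn
  have hL := one_le_log_natCast hn
  have hw : 0 < (r : ℝ) * ((n : ℝ) - r + 1) := by nlinarith
  have hlog : log ((r : ℝ) * ((n : ℝ) - r) + 1) ≤ 2 * log n := by
    calc log ((r : ℝ) * ((n : ℝ) - r) + 1) ≤ log ((n : ℝ) ^ 2) :=
          log_le_log (by nlinarith) (by nlinarith)
      _ = 2 * log n := by rw [log_pow]; norm_num
  have hinv : 1 / (((r : ℝ) + 1) * ((n : ℝ) - r + 1)) ≤ log n / (r * ((n : ℝ) - r + 1)) := by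
    rw [div_le_div_iff₀ (by nlinarith) hw]
    nlinarith
  calc sigmaTilde n r
        ≤ 2 * log n / (r * ((n : ℝ) - r + 1)) + log n / (r * ((n : ℝ) - r + 1)) := by
        unfold sigmaTilde; gcongr
    _ = 3 * log n / (r * ((n : ℝ) - r + 1)) := by ring

theorem sigmaTilde_mul_choose_le (hn : 3 ≤ n) (hr : 1 ≤ r) (hrn : r ≤ n) :
    sigmaTilde n r * n.choose r ≤ 24 * (log n * n.choose (n / 2) / n ^ 2) := by
  have hr' : (1 : ℝ) ≤ r := by exact_mod_cast hr
  have hrn' : (r : ℝ) ≤ n := by exact_mod_cast hrn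
  have hw : 0 < (r : ℝ) * ((n : ℝ) - r + 1) := by nlinarith
  have hn0 : (0 : ℝ) < n ^ 2 := by positivity
  have hL : 0 ≤ log n := by linarith [one_le_log_natCast hn]
  have hchoose : (n : ℝ) ^ 2 * n.choose r ≤ 8 * r * ((n : ℝ) - r + 1) * n.choose (n / 2) := by
    have := sq_mul_choose_le hr hrn
    rw [← Nat.cast_le (α := ℝ)] at this
    push_cast [Nat.cast_sub hrn] at this
    exact this
  calc sigmaTilde n r * n.choose r ≤ 3 * log n / (r * ((n : ℝ) - r + 1)) * n.choose r := by
        gcongr; exact sigmaTilde_le hn hr hrn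
    _ ≤ 24 * (log n * n.choose (n / 2) / n ^ 2) := by
        rw [div_mul_eq_mul_div, ← mul_div_assoc, div_le_div_iff₀ hw hn0]
        nlinarith

end sigmaTilde

section centralScale

variable {n : ℕ}

theorem one_le_log_mul_choose_half_div_sq (hn : 16 ≤ n) :
    1 ≤ log n * n.choose (n / 2) / n ^ 2 := by
  have hL := one_le_log_natCast (n := n) (by omega)
  have hM : ((n : ℝ) ^ 2) ≤ n.choose (n / 2) := by exact_mod_cast sq_le_choose_half hn
  rw [le_div_iff₀ (by positivity)]
  nlinarith

theorem fifty_mul_log_mul_choose_half_div_sq_le (hn : 16 ≤ n) :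
    50 * (log n * n.choose (n / 2) / n ^ 2) ≤ 2 ^ n * (n + 1) := by
  have hn' : (16 : ℝ) ≤ n := by exact_mod_cast hn
  have hLn : log n ≤ n := (log_le_sub_one_of_pos (by positivity)).trans (by linarith)
  have hM : (n.choose (n / 2) : ℝ) ≤ 2 ^ n := by exact_mod_cast Nat.choose_le_two_pow n (n / 2)
  rw [← mul_div_assoc, div_le_iff₀ (by positivity)]
  have h50 : (50 : ℝ) ≤ n * (n + 1) := by nlinarith
  calc 50 * (log n * n.choose (n / 2)) ≤ 50 * (n * 2 ^ n) := by gcongr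
    _ ≤ n * (n + 1) * (n * 2 ^ n) := mul_le_mul_of_nonneg_right h50 (by positivity)
    _ = 2 ^ n * (n + 1) * n ^ 2 := by ring

end centralScale

/-- a bound, uniform in `r ≤ n/2`, on `Σ_{k=0}^{2⌈σ̃_{n,r}N⌉} C(2^n(n+1),k)`. -/
theorem sum_choose_le_uniform :
    ∃ c : ℝ, 0 < c ∧ ∀ᶠ n : ℕ in Filter.atTop, ∀ r : ℕ, 1 ≤ r → 2 * r ≤ n →
      (∑ k ∈ Finset.range
          (2 * ⌈(Real.log ((r : ℝ) * ((n : ℝ) - r) + 1) / ((r : ℝ) * ((n : ℝ) - r + 1)) +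
                  1 / (((r : ℝ) + 1) * ((n : ℝ) - r + 1))) * (n.choose r : ℝ)⌉₊ + 1),
          ((2 ^ n * (n + 1)).choose k : ℝ)) ≤
        2 ^ (c * (Real.logb 2 n) ^ 2 / (n : ℝ) ^ 2 * (n.choose (n / 2) : ℝ)) := by
  refine ⟨350 * log 2, by positivity, eventually_atTop.2 ⟨16, fun n hn r hr hrn => ?_⟩⟩
  change ∑ k ∈ range (2 * ⌈sigmaTilde n r * n.choose r⌉₊ + 1), _ ≤ _
  set x := sigmaTilde n r * n.choose r
  set B : ℝ := log n * n.choose (n / 2) / n ^ 2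
  have hL : 1 ≤ log n := one_le_log_natCast (by omega)
  have hB : 1 ≤ B := one_le_log_mul_choose_half_div_sq hn
  have hx0 : 0 < x :=
    mul_pos (sigmaTilde_pos (by omega)) (Nat.cast_pos.2 (Nat.choose_pos (by omega)))
  have hx : x ≤ 24 * B := sigmaTilde_mul_choose_le (by omega) hr (by omega)
  have hK : (2 * ⌈x⌉₊ : ℕ) ≤ 50 * B := by
    push_cast; linarith [Nat.ceil_lt_add_one hx0.le]
  have hQm := fifty_mul_log_mul_choose_half_div_sq_le hn
  have hnB : (n : ℝ) ^ 2 * (50 * B) = 50 * log n * n.choose (n / 2) := by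
    simp only [B]; field_simp
  have hlog : log (2 ^ n * (n + 1) / (50 * B)) ≤ 6 * log n :=
    log_two_pow_mul_succ_div_le (by omega) (by rw [hnB]; nlinarith)
  calc _ ≤ exp ((2 * ⌈x⌉₊ : ℕ) * (1 + log ((2 ^ n * (n + 1) : ℕ) / (2 * ⌈x⌉₊ : ℕ)))) :=
        sum_range_choose_le_exp (by positivity) (by exact_mod_cast hK.trans hQm)
    _ ≤ exp (50 * B * (1 + log (2 ^ n * (n + 1) / (50 * B)))) := by
        push_cast
        exact exp_le_exp.2 (mul_one_add_log_div_le_of_le (by positivity) (by exact_mod_cast hK) hQm)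
    _ ≤ exp (350 * log n * B) := exp_le_exp.2 (by nlinarith)
    _ = _ := by
        rw [rpow_def_of_pos two_pos, logb]
        congr 1
        simp only [B]
        field_simp
end

section
/- Fix an integer r ≥ 1. Then limsup_{n→∞} [ log i(J(n,r)) / ( (C(n,r)/(n−r+1)) · log n ) ] ≤ 1; that is, log i(J(n,r)) ≤ (1+o(1)) · α_{n,r} C(n,r) log n as n → ∞ with r fixed, where α_{n,r} = 1/(n−r+1). -/
open Filter
open scoped symmDiff

variable {α : Type*}

/-!
A stable set of `J(n,r)` is a family of `r`-sets no two of which share an `(r-1)`-subset, so the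
`(r-1)`-shadows of its members are disjoint and it has at most
`t = C(n,r-1)/r = C(n,r)/(n-r+1)` members. Hence `i(J(n,r)) ≤ ∑_{k ≤ t} C(N,k) ≤ (eN/t)^t` with
`N = C(n,r)`, and `N/t = n-r+1 ≤ n` gives `log i(J(n,r)) ≤ t (log e + log n)`.
-/

open Finset Real Topology

namespace SimpleGraph

variable {V : Type*} (G : SimpleGraph V)

lemma one_le_numStableSets [Finite V] : 1 ≤ numStableSets G := by
  have : Nonempty {s : Set V // G.IsStableSet s} := ⟨⟨∅, fun _ hx => hx.elim⟩⟩
  exact Nat.card_pos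

lemma numStableSets_le_sum_choose [Fintype V] {m : ℕ}
    (h : ∀ s : Finset V, G.IsStableSet ↑s → #s ≤ m) :
    numStableSets G ≤ ∑ k ∈ range (m + 1), (Fintype.card V).choose k := by
  classical
  let T := (range (m + 1)).biUnion fun k => powersetCard k (univ : Finset V)
  have hmem (s : {s : Set V // G.IsStableSet s}) : s.1.toFinset ∈ T := by
    refine mem_biUnion.2 ⟨#s.1.toFinset, mem_range.2 (Nat.lt_succ_of_le (h _ ?_)),
      mem_powersetCard.2 ⟨subset_univ _, rfl⟩⟩
    simpa using s.2
  calc numStableSets G ≤ Nat.card T :=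
        Nat.card_le_card_of_injective (fun s => ⟨s.1.toFinset, hmem s⟩)
          fun s t hst => Subtype.ext (Set.toFinset_inj.1 (congrArg Subtype.val hst))
    _ = #T := Nat.card_eq_finsetCard T
    _ ≤ ∑ k ∈ range (m + 1), #(powersetCard k (univ : Finset V)) := card_biUnion_le
    _ = _ := by simp only [card_powersetCard, card_univ]

end SimpleGraph

/- The Chernoff-type trick: weight the `k`-th term by `x ^ (k - t) ≥ 1` with `x = t / N`, sum over
all `k` by the binomial theorem, and use `1 + x ≤ exp x`. -/
lemma sum_range_choose_le_rpow {N m : ℕ} {t : ℝ} (hmt : m ≤ t) (ht : 0 < t)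
    (htN : t ≤ N) : ∑ k ∈ range (m + 1), (N.choose k : ℝ) ≤ (exp 1 * N / t) ^ t := by
  have hN : (0 : ℝ) < N := ht.trans_le htN
  have hmN : m ≤ N := by exact_mod_cast hmt.trans htN
  set x : ℝ := t / N with hx
  have hx0 : 0 < x := div_pos ht hN
  have hx1 : x ≤ 1 := div_le_one_of_le₀ htN hN.le
  have hxt : 0 < x ^ t := rpow_pos_of_pos hx0 t
  calc ∑ k ∈ range (m + 1), (N.choose k : ℝ)
      ≤ ∑ k ∈ range (m + 1), x ^ k * 1 ^ (N - k) * N.choose k / x ^ t := by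
        refine sum_le_sum fun k hk => ?_
        have hkt : (k : ℝ) ≤ t := (Nat.cast_le.2 (Nat.lt_succ_iff.1 (mem_range.1 hk))).trans hmt
        have : x ^ t ≤ x ^ k := by
          simpa only [rpow_natCast] using rpow_le_rpow_of_exponent_ge hx0 hx1 hkt
        rw [one_pow, mul_one, mul_comm, mul_div_assoc]
        exact le_mul_of_one_le_right (Nat.cast_nonneg _) ((one_le_div hxt).2 this)
    _ ≤ ∑ k ∈ range (N + 1), x ^ k * 1 ^ (N - k) * N.choose k / x ^ t :=
        sum_le_sum_of_subset_of_nonneg (range_subset_range.2 (by omega)) fun _ _ _ => by positivity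
    _ = (x + 1) ^ N / x ^ t := by rw [← sum_div, add_pow]
    _ ≤ exp x ^ N / x ^ t := by gcongr; exact add_one_le_exp x
    _ = (exp 1 * N / t) ^ t := by
        have hNx : N * x = t := by rw [hx]; field_simp
        rw [← exp_nat_mul, hNx, ← exp_one_rpow, ← div_rpow (exp_pos 1).le hx0.le, hx]
        congr 1
        field_simp

section Johnson

variable [DecidableEq α] {r : ℕ}

lemma johnsonGraph_adj_of_le_card_inter {X Y : {X : Finset α // #X = r}} (hXY : X ≠ Y)
    (h : r - 1 ≤ #(X.1 ∩ Y.1)) : (johnsonGraph α r).Adj X Y := by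
  have hX := X.2
  have hY := Y.2
  have hlt : #(X.1 ∩ Y.1) < r := by
    by_contra! hle
    have hsub : X.1 ⊆ Y.1 :=
      inter_eq_left.1 (eq_of_subset_of_card_le inter_subset_left (by omega))
    exact hXY (Subtype.ext (eq_of_subset_of_card_le hsub (by omega)))
  change #(X.1 ∆ Y.1) = 2
  rw [Finset.symmDiff_def, card_union_of_disjoint disjoint_sdiff_sdiff, card_sdiff, card_sdiff,
    inter_comm Y.1]
  omega

lemma SimpleGraph.IsStableSet.card_mul_le_choose [Fintype α] (hr : 1 ≤ r)
    {s : Finset {X : Finset α // #X = r}} (hs : (johnsonGraph α r).IsStableSet ↑s) :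
    #s * r ≤ (Fintype.card α).choose (r - 1) := by
  have hdisj : (s : Set {X : Finset α // #X = r}).PairwiseDisjoint
      fun X => powersetCard (r - 1) X.1 := by
    intro X hX Y hY hXY
    refine Finset.disjoint_left.2 fun A hAX hAY => ?_
    rw [mem_powersetCard] at hAX hAY
    exact hs hX hY (johnsonGraph_adj_of_le_card_inter hXY
      (hAX.2 ▸ card_le_card (subset_inter hAX.1 hAY.1)))
  have hshadow (X : {X : Finset α // #X = r}) : #(powersetCard (r - 1) X.1) = r := by
    rw [card_powersetCard, X.2, Nat.choose_symm hr, Nat.choose_one_right]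
  calc #s * r = #(s.biUnion fun X => powersetCard (r - 1) X.1) := by
        rw [card_biUnion hdisj, sum_congr rfl fun X _ => hshadow X, sum_const, smul_eq_mul]
    _ ≤ #(powersetCard (r - 1) (univ : Finset α)) :=
        card_le_card (biUnion_subset.2 fun X _ A hA =>
          mem_powersetCard.2 ⟨subset_univ A, (mem_powersetCard.1 hA).2⟩)
    _ = (Fintype.card α).choose (r - 1) := by rw [card_powersetCard, card_univ]

lemma SimpleGraph.IsStableSet.card_le_choose_div [Fintype α] (hr : 1 ≤ r)
    (hrn : r ≤ Fintype.card α) {s : Finset {X : Finset α // #X = r}}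
    (hs : (johnsonGraph α r).IsStableSet ↑s) :
    (#s : ℝ) ≤ (Fintype.card α).choose r / (Fintype.card α - r + 1) := by
  set n := Fintype.card α
  have hnat : #s * (n - r + 1) ≤ n.choose r := by
    refine Nat.le_of_mul_le_mul_right ?_ (by omega : 0 < r)
    calc #s * (n - r + 1) * r = #s * r * (n - (r - 1)) := by
          rw [mul_right_comm, show n - r + 1 = n - (r - 1) by omega]
      _ ≤ n.choose (r - 1) * (n - (r - 1)) := Nat.mul_le_mul_right _ (hs.card_mul_le_choose hr)
      _ = n.choose r * r := by rw [← Nat.choose_succ_right_eq, Nat.sub_add_cancel hr]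
  have hcast : ((n - r + 1 : ℕ) : ℝ) = n - r + 1 := by
    rw [Nat.cast_add, Nat.cast_sub hrn, Nat.cast_one]
  rw [← hcast, le_div_iff₀ (by positivity)]
  exact_mod_cast hnat

lemma logb_numStableSets_johnsonGraph_le [Fintype α] (hr : 1 ≤ r) (hrn : r ≤ Fintype.card α) :
    logb 2 (numStableSets (johnsonGraph α r)) ≤
      (Fintype.card α).choose r / (Fintype.card α - r + 1) *
        (logb 2 (exp 1) + logb 2 (Fintype.card α)) := by
  set n := Fintype.card α
  set t : ℝ := n.choose r / (n - r + 1)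
  have hrn' : (r : ℝ) ≤ n := by exact_mod_cast hrn
  have hr' : (1 : ℝ) ≤ r := by exact_mod_cast hr
  have hC : (1 : ℝ) ≤ n.choose r := by exact_mod_cast Nat.choose_pos hrn
  have ht : 0 < t := div_pos (by linarith) (by linarith)
  have htC : t ≤ n.choose r := div_le_self (by positivity) (by linarith)
  have hCt : n.choose r / t = n - r + 1 := by simp only [t]; field_simp
  have hcount : (numStableSets (johnsonGraph α r) : ℝ) ≤ (exp 1 * (n - r + 1)) ^ t := by
    have hstable (s : Finset {X : Finset α // #X = r})
        (hs : (johnsonGraph α r).IsStableSet ↑s) : #s ≤ ⌊t⌋₊ :=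
      Nat.le_floor (hs.card_le_choose_div hr hrn)
    have hsum := (johnsonGraph α r).numStableSets_le_sum_choose hstable
    rw [Fintype.card_finset_len] at hsum
    calc (numStableSets (johnsonGraph α r) : ℝ)
        ≤ ∑ k ∈ range (⌊t⌋₊ + 1), ((n.choose r).choose k : ℝ) := by exact_mod_cast hsum
      _ ≤ (exp 1 * n.choose r / t) ^ t := sum_range_choose_le_rpow (Nat.floor_le ht.le) ht htC
      _ = (exp 1 * (n - r + 1)) ^ t := by rw [mul_div_assoc, hCt]
  have hi : (0 : ℝ) < numStableSets (johnsonGraph α r) := by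
    exact_mod_cast (johnsonGraph α r).one_le_numStableSets
  calc logb 2 (numStableSets (johnsonGraph α r)) ≤ logb 2 ((exp 1 * (n - r + 1)) ^ t) :=
        logb_le_logb_of_le one_lt_two hi hcount
    _ = t * (logb 2 (exp 1) + logb 2 (n - r + 1)) := by
        rw [logb_rpow_eq_mul_logb_of_pos (by positivity), logb_mul (exp_pos 1).ne' (by linarith)]
    _ ≤ t * (logb 2 (exp 1) + logb 2 n) := by
        gcongr
        · exact one_lt_two
        · linarith

end Johnson
/-- for fixed `r ≥ 1`,
`limsup_{n→∞} log i(J(n,r)) / ((C(n,r)/(n−r+1)) · log n) ≤ 1`. -/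
theorem limsup_log_johnson_stableSets_fixed_rank (r : ℕ) (hr : 1 ≤ r) :
    Filter.limsup
      (fun n : ℕ =>
        Real.logb 2 (numStableSets (johnsonGraph (Fin n) r)) /
          (((n.choose r : ℝ) / ((n : ℝ) - r + 1)) * Real.logb 2 n))
      Filter.atTop ≤ 1 := by
  have hlim : Tendsto (fun n : ℕ => 1 + logb 2 (exp 1) / logb 2 n) atTop (𝓝 1) := by
    simpa using tendsto_const_nhds.add (tendsto_const_nhds.div_atTop
      ((tendsto_logb_atTop one_lt_two).comp tendsto_natCast_atTop_atTop))
  refine (limsup_le_limsup ?_ (isCoboundedUnder_le_of_eventually_le _ (x := 0) ?_)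
    hlim.isBoundedUnder_le).trans_eq hlim.limsup_eq
  all_goals filter_upwards [eventually_gt_atTop r] with n hrn
  all_goals
    have hn : (r : ℝ) < n := by exact_mod_cast hrn
    have hL : 0 < logb 2 n := logb_pos one_lt_two (by exact_mod_cast (by omega : 1 < n))
    have ht : (0 : ℝ) < n.choose r / (n - r + 1) :=
      div_pos (by exact_mod_cast Nat.choose_pos hrn.le) (by linarith)
  · have hkey := logb_numStableSets_johnsonGraph_le (α := Fin n) hr (by simpa using hrn.le)
    rw [Fintype.card_fin] at hkey
    rw [div_le_iff₀ (mul_pos ht hL)]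
    exact hkey.trans_eq (by field_simp; ring)
  · have hi := (johnsonGraph (Fin n) r).one_le_numStableSets
    exact div_nonneg (logb_nonneg one_lt_two (by exact_mod_cast hi)) (mul_pos ht hL).le
end

section
/- For all integers n and r with 0 < r < n, the number s_{n,r} of sparse paving matroids of rank r on the ground set {1,...,n} equals the number i(J(n,r)) of stable sets in the Johnson graph J(n,r). -/
open Filter
open scoped symmDiff

variable {α : Type*}

/-! A matroid of rank `r` is determined by the `r`-sets that are not bases. For a sparse
paving matroid these form a stable set of `J(n, r)`: if `A + a` and `A + b` were both
non-bases, `a` and `b` would lie in the closure of the independent `(r-1)`-set `A`; but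
`A + a + b` is spanning because the dual is paving, so `A` would span.

Conversely, the `r`-sets outside a stable set `S` satisfy basis exchange, since exchanging one
element of a basis against two different candidates produces two adjacent `r`-sets, at most one
of which lies in `S`. The same observation extends every `(r-1)`-set inside an `(r+1)`-set to a
basis, which makes the resulting matroid sparse paving. -/

namespace Finset

variable {α : Type*} [DecidableEq α] {s t : Finset α} {a b : α}

lemma eq_insert_inter_of_sdiff_eq_singleton (h : s \ t = {a}) : s = insert a (s ∩ t) := by
  rw [← singleton_union, ← h, sdiff_union_inter]

lemma insert_erase_eq_of_sdiff_eq_singleton (ha : s \ t = {a}) (hb : t \ s = {b}) :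
    insert b (s.erase a) = t := by
  have haT : a ∉ s ∩ t := fun h => (mem_sdiff.1 (ha ▸ mem_singleton_self a)).2 (mem_inter.1 h).2
  conv_lhs => rw [eq_insert_inter_of_sdiff_eq_singleton ha, erase_insert haT, inter_comm]
  exact (eq_insert_inter_of_sdiff_eq_singleton hb).symm

lemma exists_sdiff_eq_singleton_of_card_symmDiff_eq_two (hst : s.card = t.card)
    (h : (s ∆ t).card = 2) : ∃ a, s \ t = {a} := by
  rw [symmDiff_def, sup_eq_union, card_union_of_disjoint disjoint_sdiff_sdiff,
    ← card_sdiff_comm hst] at h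
  exact card_eq_one.1 (by omega)

end Finset

section Johnson

open Finset

variable {α : Type*} [DecidableEq α] {r : ℕ} {S : Set {X : Finset α // X.card = r}}

lemma johnsonGraph_adj_iff {X Y : {X : Finset α // X.card = r}} :
    (johnsonGraph α r).Adj X Y ↔
      ∃ A a b, a ≠ b ∧ a ∉ A ∧ b ∉ A ∧ X.1 = insert a A ∧ Y.1 = insert b A := by
  obtain ⟨X, hX⟩ := X
  obtain ⟨Y, hY⟩ := Y
  change (X ∆ Y).card = 2 ↔ _
  constructor
  · intro h
    obtain ⟨a, ha⟩ := exists_sdiff_eq_singleton_of_card_symmDiff_eq_two (hX.trans hY.symm) h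
    obtain ⟨b, hb⟩ := exists_sdiff_eq_singleton_of_card_symmDiff_eq_two (hY.trans hX.symm)
      (by rwa [symmDiff_comm])
    have haX : a ∈ X \ Y := ha ▸ mem_singleton_self a
    have hbY : b ∈ Y \ X := hb ▸ mem_singleton_self b
    refine ⟨X ∩ Y, a, b, ?_, ?_, ?_, eq_insert_inter_of_sdiff_eq_singleton ha, ?_⟩
    · rintro rfl
      exact (mem_sdiff.1 hbY).2 (mem_sdiff.1 haX).1
    · exact fun h => (mem_sdiff.1 haX).2 (mem_inter.1 h).2
    · exact fun h => (mem_sdiff.1 hbY).2 (mem_inter.1 h).1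
    · rw [inter_comm]
      exact eq_insert_inter_of_sdiff_eq_singleton hb
  · rintro ⟨A, a, b, hab, ha, hb, rfl, rfl⟩
    have : insert a A ∆ insert b A = {a, b} := by
      ext x
      simp only [mem_symmDiff, mem_insert, mem_singleton]
      grind
    rw [this, card_pair hab]

lemma SimpleGraph.IsStableSet.exists_notMem_insert_or_insert
    (hS : (johnsonGraph α r).IsStableSet S) {A : Finset α} {x y : α} (hA : A.card + 1 = r)
    (hx : x ∉ A) (hy : y ∉ A) (hxy : x ≠ y) :
    ∃ X ∉ S, X.1 = insert x A ∨ X.1 = insert y A := by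
  have hxA : (insert x A).card = r := by rw [card_insert_of_notMem hx, hA]
  have hyA : (insert y A).card = r := by rw [card_insert_of_notMem hy, hA]
  by_cases hxS : ⟨_, hxA⟩ ∈ S
  · refine ⟨⟨_, hyA⟩, fun hyS => hS hxS hyS ?_, .inr rfl⟩
    exact johnsonGraph_adj_iff.2 ⟨A, x, y, hxy, hx, hy, rfl, rfl⟩
  · exact ⟨_, hxS, .inl rfl⟩

lemma SimpleGraph.IsStableSet.exists_notMem_of_subset_subset
    (hS : (johnsonGraph α r).IsStableSet S) {F T : Finset α} (hFT : F ⊆ T) (hF : F.card < r)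
    (hT : r < T.card) : ∃ X ∉ S, F ⊆ X.1 ∧ X.1 ⊆ T := by
  obtain ⟨A, hFA, hAT, hA⟩ := exists_subsuperset_card_eq hFT (n := r - 1) (by omega) (by omega)
  obtain ⟨x, hx, y, hy, hxy⟩ := one_lt_card.1 (by rw [card_sdiff_of_subset hAT]; omega :
    1 < (T \ A).card)
  rw [Finset.mem_sdiff] at hx hy
  obtain ⟨X, hXS, hX⟩ := hS.exists_notMem_insert_or_insert (by omega) hx.2 hy.2 hxy
  refine ⟨X, hXS, ?_⟩
  rcases hX with hX | hX <;> rw [hX]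
  exacts [⟨hFA.trans (subset_insert x A), insert_subset hx.1 hAT⟩,
    ⟨hFA.trans (subset_insert y A), insert_subset hy.1 hAT⟩]

lemma SimpleGraph.IsStableSet.exchangeProperty_johnson (hS : (johnsonGraph α r).IsStableSet S) :
    Matroid.ExchangeProperty fun B : Set α => ∃ X ∉ S, (X.1 : Set α) = B := by
  rintro _ _ ⟨⟨X, hX⟩, hXS, rfl⟩ ⟨⟨Y, hY⟩, hYS, rfl⟩ a ha
  dsimp only at ha
  norm_cast at ha
  suffices ∃ b ∈ Y \ X, ∃ Z ∉ S, Z.1 = insert b (X.erase a) by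
    obtain ⟨b, hb, Z, hZS, hZ⟩ := this
    exact ⟨b, by exact_mod_cast hb, Z, hZS, by rw [hZ]; push_cast; rfl⟩
  have hXY : X.card = Y.card := hX.trans hY.symm
  have notMem_erase {b} (hb : b ∈ Y \ X) : b ∉ X.erase a :=
    fun h => (mem_sdiff.1 hb).2 (mem_of_mem_erase h)
  rcases Nat.lt_or_ge 1 (Y \ X).card with hlt | hle
  · obtain ⟨b, hb, c, hc, hbc⟩ := one_lt_card.1 hlt
    obtain ⟨Z, hZS, hZ | hZ⟩ := hS.exists_notMem_insert_or_insert
      (by rw [card_erase_add_one (mem_sdiff.1 ha).1, hX]) (notMem_erase hb) (notMem_erase hc) hbc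
    exacts [⟨b, hb, Z, hZS, hZ⟩, ⟨c, hc, Z, hZS, hZ⟩]
  · have hYX : 0 < (Y \ X).card := card_sdiff_comm hXY ▸ card_pos.2 ⟨a, ha⟩
    obtain ⟨b, hb⟩ := card_eq_one.1 (by omega : (Y \ X).card = 1)
    obtain ⟨a', ha'⟩ := card_eq_one.1
      (by rw [card_sdiff_comm hXY, hb, card_singleton] : (X \ Y).card = 1)
    obtain rfl : a = a' := by simpa [ha'] using ha
    exact ⟨b, hb ▸ mem_singleton_self b, ⟨Y, hY⟩, hYS,
      (insert_erase_eq_of_sdiff_eq_singleton ha' hb).symm⟩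

end Johnson

namespace Matroid

open Set

variable {α : Type*} {M : Matroid α} {A B C I : Set α} {a b : α}

lemma IsBase.rnk_eq_ncard (hB : M.IsBase B) : M.rnk = B.ncard := by
  have : {k | ∃ B', M.IsBase B' ∧ B'.ncard = k} = {B.ncard} :=
    Set.ext fun k => ⟨fun ⟨B', hB', hk⟩ => hk ▸ hB'.ncard_eq_ncard_of_isBase hB,
      fun hk => ⟨B, hB, hk.symm⟩⟩
  rw [rnk, this, csSup_singleton]

lemma isCircuitSet_iff_isCircuit : M.IsCircuitSet C ↔ M.IsCircuit C :=
  isCircuit_iff_forall_ssubset.symm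

variable [Finite α]

lemma rnk_le_ncard_ground : M.rnk ≤ M.E.ncard := by
  obtain ⟨B, hB⟩ := M.exists_isBase
  exact hB.rnk_eq_ncard ▸ ncard_le_ncard hB.subset_ground

lemma rnk_dual : M✶.rnk = M.E.ncard - M.rnk := by
  obtain ⟨B, hB⟩ := M.exists_isBase
  rw [hB.compl_isBase_dual.rnk_eq_ncard, hB.rnk_eq_ncard, ncard_sdiff hB.subset_ground]

lemma Indep.isBase_of_rnk_le_ncard (hI : M.Indep I) (h : M.rnk ≤ I.ncard) : M.IsBase I := by
  obtain ⟨B, hB, hIB⟩ := hI.exists_isBase_superset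
  rwa [eq_of_subset_of_ncard_le hIB (hB.rnk_eq_ncard ▸ h)]

lemma paving_iff : M.Paving ↔ ∀ I ⊆ M.E, I.ncard < M.rnk → M.Indep I := by
  refine ⟨fun hP I hIE hI => by_contra fun hdep => ?_, fun h C hC => by_contra fun hC' => ?_⟩
  · obtain ⟨C, hCI, hC⟩ := ((not_indep_iff hIE).1 hdep).exists_isCircuit_subset
    have := hP C (isCircuitSet_iff_isCircuit.2 hC)
    have := ncard_le_ncard hCI
    omega
  · exact hC.1.not_indep (h C hC.1.subset_ground (by omega))

lemma dual_paving_iff : M✶.Paving ↔ ∀ S ⊆ M.E, M.rnk < S.ncard → M.Spanning S := by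
  have hr := M.rnk_le_ncard_ground
  rw [paving_iff, rnk_dual, dual_ground]
  refine ⟨fun h S hSE hS => ?_, fun h I hIE hI => ?_⟩
  · rw [spanning_iff_compl_coindep]
    refine h _ sdiff_subset ?_
    rw [ncard_sdiff hSE]
    have := ncard_le_ncard hSE
    omega
  · rw [← coindep_def, coindep_iff_compl_spanning]
    refine h _ sdiff_subset ?_
    rw [ncard_sdiff hIE]
    omega

lemma SparsePaving.isBase_insert_or_isBase_insert (hsp : M.SparsePaving) (hAE : A ⊆ M.E)
    (haE : a ∈ M.E) (hbE : b ∈ M.E) (ha : a ∉ A) (hb : b ∉ A) (hab : a ≠ b)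
    (hA : A.ncard + 1 = M.rnk) : M.IsBase (insert a A) ∨ M.IsBase (insert b A) := by
  by_contra! h
  have hAi : M.Indep A := paving_iff.1 hsp.1 A hAE (by omega)
  have mem_closure {x} (hxE : x ∈ M.E) (hx : x ∉ A) (hxB : ¬ M.IsBase (insert x A)) :
      x ∈ M.closure A := by
    by_contra hxA
    refine hxB (((hAi.insert_indep_iff_of_notMem hx).2 ⟨hxE, hxA⟩).isBase_of_rnk_le_ncard ?_)
    rw [ncard_insert_of_notMem hx]
    omega
  have hspan : M.Spanning (insert a (insert b A)) := by
    refine dual_paving_iff.1 hsp.2 _ (insert_subset haE (insert_subset hbE hAE)) ?_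
    rw [ncard_insert_of_notMem (by simp [hab, ha]), ncard_insert_of_notMem hb]
    omega
  have hAs : M.Spanning A := by
    rw [spanning_iff_closure_eq, ← closure_closure]
    exact hspan.closure_eq_of_superset (insert_subset (mem_closure haE ha h.1)
      (insert_subset (mem_closure hbE hb h.2) (M.subset_closure A)))
  have := (hAi.isBase_of_spanning hAs).rnk_eq_ncard
  omega

end Matroid

section SparsePavingEquiv

open Set Matroid

variable {α : Type*} [DecidableEq α] [Fintype α] {r : ℕ}

lemma Matroid.SparsePaving.isStableSet_johnson_nonbases {M : Matroid α} (hsp : M.SparsePaving)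
    (hE : M.E = univ) (hrnk : M.rnk = r) :
    (johnsonGraph α r).IsStableSet {X | ¬ M.IsBase X.1} := by
  intro X hX Y hY hadj
  obtain ⟨A, a, b, hab, ha, hb, hXA, hYA⟩ := johnsonGraph_adj_iff.1 hadj
  have hA : (A : Set α).ncard + 1 = M.rnk := by
    rw [ncard_coe_finset, hrnk, ← X.2, hXA, Finset.card_insert_of_notMem ha]
  obtain hXB | hYB := hsp.isBase_insert_or_isBase_insert (hE ▸ subset_univ _) (hE ▸ mem_univ a)
    (hE ▸ mem_univ b) (by simpa) (by simpa) hab hA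
  · exact hX (by rwa [hXA, Finset.coe_insert])
  · exact hY (by rwa [hYA, Finset.coe_insert])

def Matroid.ofJohnsonStableSet (S : Set {X : Finset α // X.card = r})
    (hS : (johnsonGraph α r).IsStableSet S) (hr0 : 0 < r) (hr : r < Fintype.card α) :
    Matroid α :=
  Matroid.ofIsBaseOfFinite finite_univ (fun B => ∃ X ∉ S, (X.1 : Set α) = B)
    (let ⟨X, hXS, _⟩ := hS.exists_notMem_of_subset_subset (Finset.empty_subset Finset.univ)
      (by simpa) (by simpa)
    ⟨_, X, hXS, rfl⟩)
    hS.exchangeProperty_johnson (fun _ _ => subset_univ _)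

variable {S : Set {X : Finset α // X.card = r}} {hS : (johnsonGraph α r).IsStableSet S}
  {hr0 : 0 < r} {hr : r < Fintype.card α}

lemma Matroid.ofJohnsonStableSet_isBase_iff {B : Set α} :
    (ofJohnsonStableSet S hS hr0 hr).IsBase B ↔ ∃ X ∉ S, (X.1 : Set α) = B :=
  Iff.rfl

lemma Matroid.ofJohnsonStableSet_rnk : (ofJohnsonStableSet S hS hr0 hr).rnk = r := by
  obtain ⟨_, X, hXS, rfl⟩ := (ofJohnsonStableSet S hS hr0 hr).exists_isBase
  rw [IsBase.rnk_eq_ncard (M := ofJohnsonStableSet S hS hr0 hr) ⟨X, hXS, rfl⟩, ncard_coe_finset,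
    X.2]

lemma Matroid.ofJohnsonStableSet_sparsePaving :
    (ofJohnsonStableSet S hS hr0 hr).SparsePaving := by
  refine ⟨paving_iff.2 fun I _ hI => ?_, dual_paving_iff.2 fun T _ hT => ?_⟩
  · rw [ofJohnsonStableSet_rnk, ncard_eq_toFinset_card I] at hI
    obtain ⟨X, hXS, hIX, -⟩ :=
      hS.exists_notMem_of_subset_subset (Finset.subset_univ _) hI (by simpa using hr)
    exact IsBase.indep (M := ofJohnsonStableSet S hS hr0 hr) ⟨X, hXS, rfl⟩ |>.subset
      (Finite.toFinset_subset.1 hIX)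
  · rw [ofJohnsonStableSet_rnk, ncard_eq_toFinset_card T] at hT
    obtain ⟨X, hXS, -, hXT⟩ := hS.exists_notMem_of_subset_subset (Finset.empty_subset _)
      (by simpa using hr0) hT
    exact IsBase.spanning_of_superset (M := ofJohnsonStableSet S hS hr0 hr) ⟨X, hXS, rfl⟩
      (Finite.subset_toFinset.1 hXT)

def sparsePavingEquivStableSet (hr0 : 0 < r) (hr : r < Fintype.card α) :
    {M : Matroid α // M.E = univ ∧ M.rnk = r ∧ M.SparsePaving} ≃
      {S : Set {X : Finset α // X.card = r} // (johnsonGraph α r).IsStableSet S} where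
  toFun M := ⟨{X | ¬ M.1.IsBase X.1}, M.2.2.2.isStableSet_johnson_nonbases M.2.1 M.2.2.1⟩
  invFun S := ⟨ofJohnsonStableSet S.1 S.2 hr0 hr, rfl, ofJohnsonStableSet_rnk,
    ofJohnsonStableSet_sparsePaving⟩
  left_inv := by
    rintro ⟨M, hE, hrnk, -⟩
    refine Subtype.ext <| ext_isBase hE.symm fun B _ => ?_
    simp only [ofJohnsonStableSet_isBase_iff, mem_ofPred_eq, not_not]
    refine ⟨fun ⟨X, hX, hXB⟩ => hXB ▸ hX,
      fun hB => ⟨⟨(toFinite B).toFinset, ?_⟩, by simpa, by simp⟩⟩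
    rw [← ncard_eq_toFinset_card, ← hB.rnk_eq_ncard, hrnk]
  right_inv := by
    rintro ⟨S, hS⟩
    refine Subtype.ext <| Set.ext fun X => ?_
    simp [ofJohnsonStableSet_isBase_iff, Subtype.val_inj]

end SparsePavingEquiv

/-- `s_{n,r} = i(J(n,r))` for `0 < r < n`. -/
theorem sparsePavingRk_eq_johnson_stableSets (n r : ℕ) (hr0 : 0 < r) (hrn : r < n) :
    numSparsePavingRk n r = numStableSets (johnsonGraph (Fin n) r) :=
  Nat.card_congr (sparsePavingEquivStableSet hr0 (by simpa using hrn))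
end

section
/- For all sufficiently large n, the number m'_n of matroids on the ground set {1,...,n} with no loops and no coloops satisfies m'_n ≥ 2^{C(n,⌊n/2⌋)/n}. -/
open Filter
open scoped symmDiff

variable {α : Type*}

/-! Label the `n` elements by `ZMod n`. Two `r`-sets that differ by exchanging a single element
have different label sums, so each fibre of the label sum is a stable set of the Johnson graph,
and by pigeonhole some fibre has at least `C(n, r) / n` members. For every family `A` of `r`-sets
that is stable in this sense, the `r`-sets outside `A` are the bases of a sparse paving matroid
whose circuit-hyperplanes are the members of `A`. Distinct subfamilies of one fibre give distinct
matroids, and for `2 ≤ r ≤ n - 2` none of them has a loop or a coloop; take `r = ⌊n/2⌋`. -/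

section ExchangeFree

open Finset

variable [DecidableEq α]

/-- `A` is a stable set of the Johnson graph: no two members differ by exchanging one element. -/
def ExchangeFree (A : Finset (Finset α)) : Prop :=
  ∀ ⦃I : Finset α⦄ ⦃e f : α⦄, e ∉ I → f ∉ I → insert e I ∈ A → insert f I ∈ A → e = f

theorem ExchangeFree.mono {A B : Finset (Finset α)} (hB : ExchangeFree B) (hAB : A ⊆ B) :
    ExchangeFree A :=
  fun _ _ _ he hf heA hfA => hB he hf (hAB heA) (hAB hfA)

theorem ExchangeFree.exists_erase_notMem {A : Finset (Finset α)} (hA : ExchangeFree A)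
    {K : Finset α} (hK : 1 < K.card) : ∃ a ∈ K, K.erase a ∉ A := by
  obtain ⟨a, ha, b, hb, hab⟩ := one_lt_card.1 hK
  by_contra! h
  have hbI : b ∉ (K.erase a).erase b := notMem_erase b _
  have haI : a ∉ (K.erase a).erase b := fun h => notMem_erase a K (mem_of_mem_erase h)
  refine hab (hA haI hbI ?_ ?_)
  · rw [erase_right_comm, insert_erase (mem_erase.2 ⟨hab, ha⟩)]
    exact h b hb
  · rw [insert_erase (mem_erase.2 ⟨hab.symm, hb⟩)]
    exact h a ha

theorem ExchangeFree.exists_insert_notMem {A : Finset (Finset α)} (hex : ExchangeFree A) {r : ℕ}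
    {I J : Finset α} (hJ : J.card ≤ r ∧ J ∉ A) (hIJ : I.card < J.card) :
    ∃ e ∈ J, e ∉ I ∧ (insert e I).card ≤ r ∧ insert e I ∉ A := by
  by_contra! hcon
  have hins : ∀ e ∈ J \ I, insert e I ∈ A := fun e he => by
    obtain ⟨heJ, heI⟩ := mem_sdiff.1 he
    exact hcon e heJ heI (by rw [card_insert_of_notMem heI]; omega)
  obtain ⟨e, he⟩ : (J \ I).Nonempty :=
    sdiff_nonempty.2 fun h => (card_le_card h).not_gt hIJ
  -- All of `J \ I` is the single element `e`, so `J = insert e I ∈ A`.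
  have hJsub : J ⊆ insert e I := fun x hx => by
    by_cases hxI : x ∈ I
    · exact mem_insert_of_mem hxI
    · have hx' : x ∈ J \ I := mem_sdiff.2 ⟨hx, hxI⟩
      rw [hex (mem_sdiff.1 hx').2 (mem_sdiff.1 he).2 (hins x hx') (hins e he)]
      exact mem_insert_self e I
  have hJeq : J = insert e I := eq_of_subset_of_card_le hJsub
    (by rw [card_insert_of_notMem (mem_sdiff.1 he).2]; omega)
  exact hJ.2 (hJeq ▸ hins e he)

theorem exchangeFree_of_sum_eq {G : Type*} [AddCancelCommMonoid G] {w : α → G}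
    (hw : Function.Injective w) {c : G} {A : Finset (Finset α)}
    (hA : ∀ X ∈ A, ∑ x ∈ X, w x = c) : ExchangeFree A := by
  intro I e f he hf heA hfA
  have hsum := (hA _ heA).trans (hA _ hfA).symm
  rw [sum_insert he, sum_insert hf] at hsum
  exact hw (add_right_cancel hsum)

theorem exists_exchangeFree_card_ge [Fintype α] (r : ℕ) :
    ∃ A : Finset (Finset α), (∀ X ∈ A, X.card = r) ∧ ExchangeFree A ∧
      ((Fintype.card α).choose r : ℝ) / Fintype.card α ≤ A.card := by
  set n := Fintype.card α
  rcases Nat.eq_zero_or_pos n with hn | hn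
  · exact ⟨∅, by simp, fun _ _ _ _ _ h => absurd h (notMem_empty _), by simp [hn]⟩
  have : NeZero n := ⟨hn.ne'⟩
  let w : α ≃ ZMod n := Fintype.equivOfCardEq (ZMod.card n).symm
  have hb : (univ : Finset (ZMod n)).card • ((n.choose r : ℝ) / n) ≤
      (powersetCard r (univ : Finset α)).card := by
    rw [card_univ, ZMod.card, card_powersetCard, card_univ, nsmul_eq_mul,
      mul_div_cancel₀ _ (by positivity)]
  obtain ⟨c, -, hc⟩ := exists_le_card_fiber_of_nsmul_le_card_of_maps_to
    (f := fun X => ∑ x ∈ X, w x) (fun _ _ => mem_univ _) univ_nonempty hb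
  refine ⟨_, fun X hX => ?_, exchangeFree_of_sum_eq w.injective (c := c) fun X hX => ?_, hc⟩
  · exact (mem_powersetCard.1 (mem_filter.1 hX).1).2
  · exact (mem_filter.1 hX).2

end ExchangeFree

namespace Matroid

open Finset

variable [DecidableEq α]

/-- The sparse paving matroid of rank `r` on `univ` whose circuit-hyperplanes are the members
of `A`. -/
def ofCircuitHyperplanes (r : ℕ) (A : Finset (Finset α)) (hr : 0 < r)
    (hA : ∀ X ∈ A, X.card = r) (hex : ExchangeFree A) : Matroid α :=
  (IndepMatroid.ofFinset Set.univ (fun I => I.card ≤ r ∧ I ∉ A)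
    (indep_empty := ⟨by simp, fun h => by simpa [hr.ne] using hA _ h⟩)
    (indep_subset := fun I J hJ hIJ =>
      ⟨(card_le_card hIJ).trans hJ.1, fun hI => hJ.2 <| by
        rwa [← eq_of_subset_of_card_le hIJ (by rw [hA I hI]; exact hJ.1)]⟩)
    (indep_aug := fun _ _ _ hJ hIJ => hex.exists_insert_notMem hJ hIJ)
    (subset_ground := fun _ _ => Set.subset_univ _)).matroid

variable {r : ℕ} {A : Finset (Finset α)} {hr : 0 < r} {hA : ∀ X ∈ A, X.card = r}
  {hex : ExchangeFree A}

theorem ofCircuitHyperplanes_indep_iff {I : Finset α} :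
    (ofCircuitHyperplanes r A hr hA hex).Indep I ↔ I.card ≤ r ∧ I ∉ A := by
  rw [ofCircuitHyperplanes, IndepMatroid.matroid_indep_iff, IndepMatroid.ofFinset_indep]

theorem ofCircuitHyperplanes_isBase {B : Finset α} (hB : B.card = r) (hBA : B ∉ A) :
    (ofCircuitHyperplanes r A hr hA hex).IsBase B := by
  refine (ofCircuitHyperplanes_indep_iff.2 ⟨hB.le, hBA⟩).isBase_of_forall_insert
    fun e he hindep => ?_
  have heB : e ∉ B := by simpa using he.2
  rw [← coe_insert, ofCircuitHyperplanes_indep_iff, card_insert_of_notMem heB] at hindep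
  omega

theorem ofCircuitHyperplanes_loopFree (h2r : 2 ≤ r) :
    (ofCircuitHyperplanes r A hr hA hex).LoopFree := by
  intro e _
  rw [← coe_singleton, ofCircuitHyperplanes_indep_iff, card_singleton]
  exact ⟨by omega, fun he => by have := hA _ he; simp at this; omega⟩

theorem ofCircuitHyperplanes_coloopFree [Fintype α] (hrn : r + 2 ≤ Fintype.card α) :
    (ofCircuitHyperplanes r A hr hA hex).ColoopFree := by
  intro e _
  obtain ⟨K, hKe, hK⟩ := exists_subset_card_eq (s := univ.erase e) (n := r + 1)
    (by rw [card_erase_of_mem (mem_univ e), card_univ]; omega)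
  obtain ⟨a, ha, hKa⟩ := hex.exists_erase_notMem (K := K) (by omega)
  refine dual_indep_iff_exists'.2 ⟨fun _ _ => Set.mem_univ _, _,
    ofCircuitHyperplanes_isBase (by rw [card_erase_of_mem ha, hK]; rfl) hKa, ?_⟩
  rw [Set.disjoint_singleton_left, mem_coe]
  exact fun he => notMem_erase e univ (hKe (mem_of_mem_erase he))

theorem mem_iff_of_ofCircuitHyperplanes {X : Finset α} :
    X ∈ A ↔ X.card = r ∧ ¬ (ofCircuitHyperplanes r A hr hA hex).Indep X := by
  rw [ofCircuitHyperplanes_indep_iff]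
  exact ⟨fun hX => ⟨hA X hX, fun h => h.2 hX⟩, fun ⟨hXr, hX⟩ => by
    by_contra hXA; exact hX ⟨hXr.le, hXA⟩⟩

theorem ofCircuitHyperplanes_injective {A' : Finset (Finset α)} {hA' : ∀ X ∈ A', X.card = r}
    {hex' : ExchangeFree A'}
    (h : ofCircuitHyperplanes r A hr hA hex = ofCircuitHyperplanes r A' hr hA' hex') : A = A' := by
  ext X
  rw [mem_iff_of_ofCircuitHyperplanes (hr := hr) (hA := hA) (hex := hex), h,
    ← mem_iff_of_ofCircuitHyperplanes]

end Matroid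

instance Matroid.finite [Finite α] : Finite (Matroid α) :=
  Finite.of_injective (fun M : Matroid α => (M.E, M.Indep)) fun _ _ h =>
    Matroid.ext_indep (congrArg Prod.fst h) fun I _ =>
      Iff.of_eq (congrFun (congrArg Prod.snd h) I)

theorem two_pow_card_le_numMatroidsNoLoopColoop {n r : ℕ} {A : Finset (Finset (Fin n))}
    (hA : ∀ X ∈ A, X.card = r) (hex : ExchangeFree A) (h2r : 2 ≤ r) (hrn : r + 2 ≤ n) :
    2 ^ A.card ≤ numMatroidsNoLoopColoop n := by
  have hsub {B : Finset (Finset (Fin n))} (hB : B ∈ A.powerset) : ∀ X ∈ B, X.card = r :=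
    fun X hX => hA X (Finset.mem_powerset.1 hB hX)
  let M (B : A.powerset) : Matroid (Fin n) :=
    .ofCircuitHyperplanes r B (by omega) (hsub B.2) (hex.mono (Finset.mem_powerset.1 B.2))
  rw [← Finset.card_powerset, ← Nat.card_eq_finsetCard]
  refine Nat.card_le_card_of_injective (fun B => ⟨M B, rfl,
    Matroid.ofCircuitHyperplanes_loopFree h2r,
    Matroid.ofCircuitHyperplanes_coloopFree (by simpa using hrn)⟩) fun B B' h => ?_
  have hM : M B = M B' := congrArg Subtype.val h
  exact Subtype.ext (Matroid.ofCircuitHyperplanes_injective hM)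

/-- for all sufficiently large `n`, `m'_n ≥ 2^{C(n,⌊n/2⌋)/n}`. -/
theorem noLoopColoop_lower :
    ∀ᶠ n : ℕ in Filter.atTop,
      (2 : ℝ) ^ ((n.choose (n / 2) : ℝ) / n) ≤ (numMatroidsNoLoopColoop n : ℝ) := by
  filter_upwards [eventually_ge_atTop 4] with n hn
  obtain ⟨A, hA, hex, hlarge⟩ := exists_exchangeFree_card_ge (α := Fin n) (n / 2)
  rw [Fintype.card_fin] at hlarge
  calc (2 : ℝ) ^ ((n.choose (n / 2) : ℝ) / n)
      ≤ (2 : ℝ) ^ (A.card : ℝ) := Real.rpow_le_rpow_of_exponent_le (by norm_num) hlarge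
    _ = ((2 ^ A.card : ℕ) : ℝ) := by norm_cast
    _ ≤ numMatroidsNoLoopColoop n := by
      exact_mod_cast two_pow_card_le_numMatroidsNoLoopColoop hA hex (by omega) (by omega)
end
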